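/- Let n = 2k be even with k ≥ 2, and let 𝔾 be the Green's function of the cycle C_n. Then for every vertex j, 𝔾(1,j) − 𝔾(1+k,j) = k/2 − |j−1|_c, where |j−1|_c denotes the graph distance between j and 1 in C_n. -/

import Mathlib

/-!
The difference `r y = 𝔾 0 y - 𝔾 k y` of two rows of `𝔾` has zero sum and solves
`L r = δ₀ - δₖ` for the random-walk Laplacian `L = I - D⁻¹A` of the cycle. The profile
`k/2 - |y|_c` satisfies the same two conditions: its second differences vanish except at `0`
and at the antipode `k`, and the distances `|y|_c` and `|y + k|_c` always add up to `k`.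
A function `h` on the cycle with `L h = 0` has constant first differences, which vanish because
they sum to zero around the cycle; so `h` is constant, hence zero if its sum is zero.
-/

/-- The graph distance `|x−y|_c = min(|x−y|, n−|x−y|)` between two vertices of the cycle
`C_n`. -/
def cycleDist (n : ℕ) (x y : Fin n) : ℕ :=
  min ((x : ℤ) - (y : ℤ)).natAbs (n - ((x : ℤ) - (y : ℤ)).natAbs)

open SimpleGraph Finset

namespace Fin

variable {n : ℕ} [NeZero n]

theorem add_one_induction {P : Fin n → Prop} (zero : P 0) (succ : ∀ y, P y → P (y + 1))
    (y : Fin n) : P y := by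
  suffices ∀ m (hm : m < n), P ⟨m, hm⟩ from this y y.isLt
  intro m
  induction m with
  | zero => exact fun _ => zero
  | succ m ih =>
    intro hm
    have hstep : (⟨m, by omega⟩ + 1 : Fin n) = ⟨m + 1, hm⟩ :=
      Fin.ext (Fin.val_add_one_of_lt' hm)
    rw [← hstep]
    exact succ _ (ih _)

theorem val_add_one_eq_ite (y : Fin n) :
    (y + 1).val = if y.val + 1 = n then 0 else y.val + 1 := by
  rcases (Nat.one_le_iff_ne_zero.mpr (NeZero.ne n)).eq_or_lt with rfl | hn
  · simp [Subsingleton.elim y 0]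
  · have := y.isLt
    rw [Fin.val_add_eq_ite, Fin.val_one', Nat.mod_eq_of_lt hn]
    split_ifs <;> omega

theorem val_sub_one_eq_ite (y : Fin n) :
    (y - 1).val = if y.val = 0 then n - 1 else y.val - 1 := by
  have h := val_add_one_eq_ite (y - 1)
  rw [sub_add_cancel] at h
  have := (y - 1).isLt
  split_ifs at h ⊢ <;> omega

variable {M : Type*} [AddCommGroup M]

theorem sum_add_one_sub (f : Fin n → M) : ∑ y, (f (y + 1) - f y) = 0 := by
  rw [sum_sub_distrib, sub_eq_zero]
  exact Fintype.sum_equiv (Equiv.addRight 1) _ _ fun _ => rfl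

theorem eq_zero_of_add_one_eq_of_sum_eq_zero [IsAddTorsionFree M] {f : Fin n → M}
    (hf : ∀ y, f (y + 1) = f y) (hsum : ∑ y, f y = 0) (y : Fin n) : f y = 0 := by
  have hconst : ∀ y, f y = f 0 := add_one_induction rfl fun y hy => (hf y).trans hy
  rw [Fintype.sum_congr _ _ hconst, sum_const, nsmul_eq_zero_iff_right (NeZero.ne n)] at hsum
  rw [hconst, hsum]

end Fin

section CycleLaplacian

variable {K : Type*} [Field K] {n : ℕ} [NeZero n]

/-- The random-walk Laplacian `I - D⁻¹A` of the cycle `C_n`, all of whose degrees are `2`. -/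
def cycleLaplacian (f : Fin n → K) (y : Fin n) : K :=
  f y - 2⁻¹ * (f (y - 1) + f (y + 1))

theorem cycleLaplacian_sub (f g : Fin n → K) (y : Fin n) :
    cycleLaplacian (f - g) y = cycleLaplacian f y - cycleLaplacian g y := by
  simp only [cycleLaplacian, Pi.sub_apply]
  ring

theorem eq_zero_of_cycleLaplacian_eq_zero_of_sum_eq_zero [CharZero K] {f : Fin n → K}
    (hf : ∀ y, cycleLaplacian f y = 0) (hsum : ∑ y, f y = 0) (y : Fin n) : f y = 0 := by
  have hslope : ∀ y, f (y + 1 + 1) - f (y + 1) = f (y + 1) - f y := fun y => by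
    have := hf (y + 1)
    rw [cycleLaplacian, add_sub_cancel_right] at this
    linear_combination (-2) * this
  have hflat : ∀ y, f (y + 1) - f y = 0 :=
    Fin.eq_zero_of_add_one_eq_of_sum_eq_zero hslope (Fin.sum_add_one_sub f)
  exact Fin.eq_zero_of_add_one_eq_of_sum_eq_zero (fun y => sub_eq_zero.mp (hflat y)) hsum y

theorem mul_one_sub_cycleGraph_adjMatrix_apply (hn : 3 ≤ n) (M : Matrix (Fin n) (Fin n) K)
    (x y : Fin n) :
    (M * (1 - (Matrix.diagonal fun _ => (2 : K)⁻¹ : Matrix (Fin n) (Fin n) K)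
      * (cycleGraph n).adjMatrix K)) x y
      = cycleLaplacian (M x) y := by
  obtain ⟨m, rfl⟩ : ∃ m, n = m + 3 := ⟨n - 3, by omega⟩
  have hne : y - 1 ≠ y + 1 := by
    simp only [ne_eq, sub_eq_iff_eq_add, add_assoc y, left_eq_add]
    exact ne_of_beq_false rfl
  rw [Matrix.mul_sub, Matrix.mul_one, ← Matrix.mul_assoc, Matrix.sub_apply, mul_adjMatrix_apply,
    cycleGraph_neighborFinset, sum_pair hne]
  simp only [Matrix.mul_diagonal, cycleLaplacian, sub_right_inj]
  ring

end CycleLaplacian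

section Distance

theorem cycleDist_zero_right {n : ℕ} [NeZero n] (y : Fin n) :
    cycleDist n y 0 = min y.val (n - y.val) := by
  simp [cycleDist]

variable {k : ℕ} [NeZero k]

def antipode (k : ℕ) [NeZero k] : Fin (2 * k) :=
  ⟨k, lt_two_mul_self (NeZero.pos k)⟩

@[simp]
theorem val_antipode : (antipode k).val = k :=
  rfl

theorem cycleDist_add_cycleDist_add_antipode (y : Fin (2 * k)) :
    cycleDist (2 * k) y 0 + cycleDist (2 * k) (y + antipode k) 0 = k := by
  have := y.isLt
  rw [cycleDist_zero_right, cycleDist_zero_right, Fin.val_add_eq_ite, val_antipode]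
  split_ifs <;> omega

theorem sum_cycleDist_zero_right : ∑ y : Fin (2 * k), cycleDist (2 * k) y 0 = k * k := by
  have hshift : ∑ y, cycleDist (2 * k) (y + antipode k) 0 = ∑ y, cycleDist (2 * k) y 0 :=
    Fintype.sum_equiv (Equiv.addRight _) _ _ fun _ => rfl
  have htotal := Fintype.sum_congr _ _ (cycleDist_add_cycleDist_add_antipode (k := k))
  rw [sum_add_distrib, hshift, sum_const, card_univ, Fintype.card_fin, smul_eq_mul] at htotal
  nlinarith

theorem cycleLaplacian_half_sub_cycleDist (y : Fin (2 * k)) :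
    cycleLaplacian (fun z => (k : ℝ) / 2 - cycleDist (2 * k) z 0) y
      = (if 0 = y then 1 else 0) - (if antipode k = y then 1 else 0) := by
  have hnat : cycleDist (2 * k) (y - 1) 0 + cycleDist (2 * k) (y + 1) 0
        + 2 * (if y.val = k then 1 else 0)
      = 2 * cycleDist (2 * k) y 0 + 2 * (if y.val = 0 then 1 else 0) := by
    have := y.isLt
    have := NeZero.pos k
    simp only [cycleDist_zero_right, Fin.val_add_one_eq_ite, Fin.val_sub_one_eq_ite]
    split_ifs <;> omega
  have hreal := congrArg (Nat.cast : ℕ → ℝ) hnat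
  have hzero : (0 : Fin (2 * k)) = y ↔ y.val = 0 := by rw [Fin.ext_iff, eq_comm]; rfl
  have hantipode : antipode k = y ↔ y.val = k := by rw [Fin.ext_iff, eq_comm, val_antipode]
  simp only [hzero, hantipode, cycleLaplacian]
  push_cast at hreal
  split_ifs at hreal ⊢ <;> linarith

end Distance

/-- For even `n = 2k` with `k ≥ 2` and the Green's function `𝔾` of the cycle
`C_n` (vertices `1,…,n`, here `0`-indexed): for every vertex `j`,
`𝔾(1,j) − 𝔾(1+k,j) = k/2 − |j−1|_c`. -/
theorem green_function_even_cycle_antipodal_difference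
    (k : ℕ) (hk : 2 ≤ k)
    -- the Green's function `𝔾` of `C_{2k}` (all degrees are `2`, `vol(C_{2k}) = 2·(2k)`)
    (𝔾 : Matrix (Fin (2 * k)) (Fin (2 * k)) ℝ)
    (hG1 : ∀ x y : Fin (2 * k),
      (𝔾 * (1 - ((Matrix.diagonal fun _ => (2 : ℝ)⁻¹ : Matrix (Fin (2 * k)) (Fin (2 * k)) ℝ))
          * (SimpleGraph.cycleGraph (2 * k)).adjMatrix ℝ)) x y
        = (if x = y then (1 : ℝ) else 0) - 2 / (2 * (2 * (k : ℝ))))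
    (hG2 : ∀ x : Fin (2 * k), ∑ y, 𝔾 x y = 0) :
    ∀ j : Fin (2 * k),
      𝔾 (⟨0, by omega⟩ : Fin (2 * k)) j - 𝔾 (⟨k, by omega⟩ : Fin (2 * k)) j
        = (k : ℝ) / 2 - (cycleDist (2 * k) j (⟨0, by omega⟩ : Fin (2 * k)) : ℝ) := by
  have : NeZero k := ⟨by omega⟩
  set profile : Fin (2 * k) → ℝ := fun z => (k : ℝ) / 2 - cycleDist (2 * k) z 0
  set h := 𝔾 0 - 𝔾 (antipode k) - profile with h_def
  have hlap : ∀ y, cycleLaplacian h y = 0 := fun y => by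
    rw [h_def, cycleLaplacian_sub, cycleLaplacian_sub,
      ← mul_one_sub_cycleGraph_adjMatrix_apply (by omega),
      ← mul_one_sub_cycleGraph_adjMatrix_apply (by omega), hG1, hG1,
      cycleLaplacian_half_sub_cycleDist]
    ring
  have hsum : ∑ y, h y = 0 := by
    simp only [h_def, profile, Pi.sub_apply, sum_sub_distrib, hG2]
    push_cast [sum_const, card_univ, Fintype.card_fin, ← Nat.cast_sum,
      sum_cycleDist_zero_right]
    ring
  intro j
  have := eq_zero_of_cycleLaplacian_eq_zero_of_sum_eq_zero hlap hsum j
  simp only [h_def, profile, Pi.sub_apply] at this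
  exact sub_eq_zero.mp this
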